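/- Let I ⊆ ℝ be an open interval, γ = (x, z) : I → ℝ² a smooth curve with x(u) ≠ 0 for all u ∈ I, u₀ ∈ I, h ∈ ℝ, and (n, r) one of (2,3), (2,5), (2,7), (3,4), (3,5). Define f(u,v) := (x(u)·cos v, x(u)·sin v, z(u) + h·v). Then γ is 𝒜-equivalent at u₀ to the curve t ↦ (t^n, t^r) if and only if for every v₀ ∈ ℝ the map f is 𝒜-equivalent at (u₀, v₀) to the standard (n,r)-cuspidal edge (u,v) ↦ (u^n, u^r, v). -/

import Mathlib

noncomputable section

open Real

/-- Determinant of the 2×2 matrix with columns `a`, `b`. -/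
def det2 (a b : ℝ × ℝ) : ℝ := a.1 * b.2 - a.2 * b.1

/-- `Φ : W → W'` is a smooth diffeomorphism with smooth inverse `Φinv`. -/
def SmoothDiffeoOn2 (Φ Φinv : ℝ × ℝ → ℝ × ℝ) (W W' : Set (ℝ × ℝ)) : Prop :=
  ContDiffOn ℝ (⊤ : ℕ∞) Φ W ∧ ContDiffOn ℝ (⊤ : ℕ∞) Φinv W' ∧ Set.MapsTo Φ W W' ∧
    Set.MapsTo Φinv W' W ∧ (∀ p ∈ W, Φinv (Φ p) = p) ∧ (∀ p ∈ W', Φ (Φinv p) = p)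

/-- `γ` is `𝒜`-equivalent at `c` to the curve `t ↦ (t^p, t^q)`: there are an open interval
`(a,b) ∋ 0`, a smooth `φ` on `(a,b)` with `φ(0) = c` and nowhere vanishing derivative, open
sets `W ∋ γ(c)`, `W' ∋ 0`, and a smooth diffeomorphism `Φ : W → W'` with `Φ(γ(c)) = 0`,
such that `Φ(γ(φ(t))) = (t^p, t^q)` whenever `t ∈ (a,b)` and `γ(φ(t)) ∈ W`. -/
def AEquivCurveAt (γ : ℝ → ℝ × ℝ) (c : ℝ) (p q : ℕ) : Prop :=
  ∃ (a b : ℝ) (φ : ℝ → ℝ) (W W' : Set (ℝ × ℝ)) (Φ Φinv : ℝ × ℝ → ℝ × ℝ),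
    a < 0 ∧ 0 < b ∧
    ContDiffOn ℝ (⊤ : ℕ∞) φ (Set.Ioo a b) ∧ φ 0 = c ∧ (∀ t ∈ Set.Ioo a b, deriv φ t ≠ 0) ∧
    IsOpen W ∧ IsOpen W' ∧ γ c ∈ W ∧ ((0, 0) : ℝ × ℝ) ∈ W' ∧
    SmoothDiffeoOn2 Φ Φinv W W' ∧ Φ (γ c) = (0, 0) ∧
    (∀ t ∈ Set.Ioo a b, γ (φ t) ∈ W → Φ (γ (φ t)) = (t ^ p, t ^ q))

/-- `γ` satisfies the 7/2-cusp conditions at `c` with constants `(k, l)`: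
`γ'(c) = 0`, `γ''(c) ≠ 0`, `γ'''(c) = k γ''(c)`, `γ⁽⁵⁾(c) − (10/3)k γ⁽⁴⁾(c) = l γ''(c)`,
and `det(γ''(c), γ⁽⁷⁾(c) − 7k γ⁽⁶⁾(c) − (7l − (70/3)k³) γ⁽⁴⁾(c)) ≠ 0`. -/
def SevenHalfCuspCond (γ : ℝ → ℝ × ℝ) (c k l : ℝ) : Prop :=
  deriv γ c = 0 ∧ iteratedDeriv 2 γ c ≠ 0 ∧
  iteratedDeriv 3 γ c = k • iteratedDeriv 2 γ c ∧
  iteratedDeriv 5 γ c - ((10 / 3 : ℝ) * k) • iteratedDeriv 4 γ c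
    = l • iteratedDeriv 2 γ c ∧
  det2 (iteratedDeriv 2 γ c)
    (iteratedDeriv 7 γ c - (7 * k) • iteratedDeriv 6 γ c
      - (7 * l - (70 / 3 : ℝ) * k ^ 3) • iteratedDeriv 4 γ c) ≠ 0

/-- `Φ : W → W'` is a smooth diffeomorphism of subsets of `ℝ³` with smooth inverse. -/
def SmoothDiffeoOn3 (Φ Φinv : (Fin 3 → ℝ) → (Fin 3 → ℝ)) (W W' : Set (Fin 3 → ℝ)) : Prop :=
  ContDiffOn ℝ (⊤ : ℕ∞) Φ W ∧ ContDiffOn ℝ (⊤ : ℕ∞) Φinv W' ∧ Set.MapsTo Φ W W' ∧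
    Set.MapsTo Φinv W' W ∧ (∀ p ∈ W, Φinv (Φ p) = p) ∧ (∀ p ∈ W', Φ (Φinv p) = p)

/-- `f : ℝ² → ℝ³` is `𝒜`-equivalent at `p` to the standard `(n,r)`-cuspidal edge
`(u,v) ↦ (uⁿ, uʳ, v)`. -/
def AEquivSurfAt (f : ℝ × ℝ → Fin 3 → ℝ) (p : ℝ × ℝ) (n r : ℕ) : Prop :=
  ∃ (D D' : Set (ℝ × ℝ)) (φ φinv : ℝ × ℝ → ℝ × ℝ)
    (W W' : Set (Fin 3 → ℝ)) (Φ Φinv : (Fin 3 → ℝ) → (Fin 3 → ℝ)),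
    IsOpen D ∧ IsOpen D' ∧ p ∈ D ∧ ((0, 0) : ℝ × ℝ) ∈ D' ∧
    SmoothDiffeoOn2 φ φinv D' D ∧ φ (0, 0) = p ∧
    IsOpen W ∧ IsOpen W' ∧ f p ∈ W ∧ (0 : Fin 3 → ℝ) ∈ W' ∧
    SmoothDiffeoOn3 Φ Φinv W W' ∧ Φ (f p) = 0 ∧
    (∀ q ∈ D', f (φ q) ∈ W → Φ (f (φ q)) = ![q.1 ^ n, q.1 ^ r, q.2])


open Set

namespace Stmt19

def Psi (h : ℝ) (p : Fin 3 → ℝ) : Fin 3 → ℝ :=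
  ![p 0 * Real.cos (p 2), p 0 * Real.sin (p 2), p 1 + h * p 2]

def Uset (v₀ ε : ℝ) : Set (Fin 3 → ℝ) :=
  {p | 0 < ε * p 0 ∧ p 2 ∈ Set.Ioo (v₀ - π/2) (v₀ + π/2)}

def Vset (v₀ ε : ℝ) : Set (Fin 3 → ℝ) :=
  {X | 0 < ε * (X 0 * Real.cos v₀ + X 1 * Real.sin v₀)}

def ang (v₀ : ℝ) (X : Fin 3 → ℝ) : ℝ :=
  Real.arctan ((X 1 * Real.cos v₀ - X 0 * Real.sin v₀) /
    (X 0 * Real.cos v₀ + X 1 * Real.sin v₀)) + v₀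

def PsiInv (h v₀ ε : ℝ) (X : Fin 3 → ℝ) : Fin 3 → ℝ :=
  ![ε * Real.sqrt (X 0 ^ 2 + X 1 ^ 2), X 2 - h * ang v₀ X, ang v₀ X]

variable {h v₀ ε : ℝ} (hε : ε = 1 ∨ ε = -1)

lemma eps_sq (hε : ε = 1 ∨ ε = -1) : ε * ε = 1 := by rcases hε with h | h <;> simp [h]

lemma eps_ne (hε : ε = 1 ∨ ε = -1) : ε ≠ 0 := by rcases hε with h | h <;> simp [h]

lemma isOpen_U : IsOpen (Uset v₀ ε) := by
  have h1 : IsOpen {p : Fin 3 → ℝ | 0 < ε * p 0} :=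
    isOpen_lt continuous_const ((continuous_const).mul (continuous_apply 0))
  have h2 : IsOpen {p : Fin 3 → ℝ | p 2 ∈ Set.Ioo (v₀ - π/2) (v₀ + π/2)} :=
    (isOpen_Ioo).preimage (continuous_apply 2)
  exact h1.inter h2

lemma isOpen_V : IsOpen (Vset v₀ ε) :=
  isOpen_lt continuous_const (continuous_const.mul
    (((continuous_apply 0).mul continuous_const).add ((continuous_apply 1).mul continuous_const)))

lemma contDiff_Psi : ContDiff ℝ (⊤ : ℕ∞) (Psi h) := by
  rw [contDiff_pi]
  intro i
  fin_cases i <;> simp [Psi] <;>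
  · first
    | exact (contDiff_apply ℝ ℝ 0).mul (Real.contDiff_cos.comp (contDiff_apply ℝ ℝ 2))
    | exact (contDiff_apply ℝ ℝ 0).mul (Real.contDiff_sin.comp (contDiff_apply ℝ ℝ 2))
    | exact (contDiff_apply ℝ ℝ 1).add (contDiff_const.mul (contDiff_apply ℝ ℝ 2))


variable {h v₀ ε : ℝ}


lemma V_den_ne {X : Fin 3 → ℝ} (hε : ε = 1 ∨ ε = -1) (hX : X ∈ Vset v₀ ε) :
    X 0 * Real.cos v₀ + X 1 * Real.sin v₀ ≠ 0 := by
  intro h0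
  rw [Vset, mem_setOf_eq, h0, mul_zero] at hX
  exact lt_irrefl 0 hX

lemma V_S_pos {X : Fin 3 → ℝ} (hε : ε = 1 ∨ ε = -1) (hX : X ∈ Vset v₀ ε) :
    0 < X 0 ^ 2 + X 1 ^ 2 := by
  rcases lt_or_eq_of_le (by positivity : (0:ℝ) ≤ X 0 ^ 2 + X 1 ^ 2) with hlt | heq
  · exact hlt
  · exfalso
    have h0 : X 0 = 0 ∧ X 1 = 0 := by
      constructor <;> nlinarith [sq_nonneg (X 0), sq_nonneg (X 1)]
    exact V_den_ne hε hX (by rw [h0.1, h0.2]; ring)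

lemma contDiffOn_PsiInv (hε : ε = 1 ∨ ε = -1) :
    ContDiffOn ℝ (⊤ : ℕ∞) (PsiInv h v₀ ε) (Vset v₀ ε) := by
  intro X hX
  apply ContDiffAt.contDiffWithinAt
  have hden := V_den_ne hε hX
  have hS := (V_S_pos hε hX).ne'
  have hang : ContDiffAt ℝ (⊤ : ℕ∞) (ang v₀) X := by
    apply ContDiffAt.add _ contDiffAt_const
    apply Real.contDiff_arctan.contDiffAt.comp
    exact ContDiffAt.div
      (((contDiff_apply ℝ ℝ 1).contDiffAt.mul contDiffAt_const).sub
        ((contDiff_apply ℝ ℝ 0).contDiffAt.mul contDiffAt_const))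
      (((contDiff_apply ℝ ℝ 0).contDiffAt.mul contDiffAt_const).add
        ((contDiff_apply ℝ ℝ 1).contDiffAt.mul contDiffAt_const)) hden
  rw [contDiffAt_pi]
  intro i
  fin_cases i <;> simp [PsiInv]
  · exact contDiffAt_const.mul ((Real.contDiffAt_sqrt hS).comp X
      (((contDiff_apply ℝ ℝ 0).contDiffAt.pow 2).add ((contDiff_apply ℝ ℝ 1).contDiffAt.pow 2)))
  · exact ((contDiff_apply ℝ ℝ 2).contDiffAt).sub (contDiffAt_const.mul hang)
  · exact hang


lemma mapsTo_Psi : MapsTo (Psi h) (Uset v₀ ε) (Vset v₀ ε) := by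
  rintro p ⟨hp0, hp2⟩
  have hcos : 0 < Real.cos (p 2 - v₀) := by
    apply Real.cos_pos_of_mem_Ioo
    constructor <;> [linarith [hp2.1]; linarith [hp2.2]]
  show 0 < ε * ((Psi h p) 0 * Real.cos v₀ + (Psi h p) 1 * Real.sin v₀)
  have : (Psi h p) 0 * Real.cos v₀ + (Psi h p) 1 * Real.sin v₀
      = p 0 * Real.cos (p 2 - v₀) := by
    simp only [Psi]
    rw [Real.cos_sub]
    simp [Matrix.cons_val_zero, Matrix.cons_val_one]
    ring
  rw [this]
  calc (0:ℝ) < (ε * p 0) * Real.cos (p 2 - v₀) := mul_pos hp0 hcos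
    _ = ε * (p 0 * Real.cos (p 2 - v₀)) := by ring

lemma mapsTo_PsiInv (hε : ε = 1 ∨ ε = -1) :
    MapsTo (PsiInv h v₀ ε) (Vset v₀ ε) (Uset v₀ ε) := by
  intro X hX
  have hS : 0 < X 0 ^ 2 + X 1 ^ 2 := by
    rcases lt_or_eq_of_le (by positivity : (0:ℝ) ≤ X 0 ^ 2 + X 1 ^ 2) with hlt | heq
    · exact hlt
    · exfalso
      have h0 : X 0 = 0 := by nlinarith [sq_nonneg (X 0), sq_nonneg (X 1)]
      have h1 : X 1 = 0 := by nlinarith [sq_nonneg (X 0), sq_nonneg (X 1)]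
      rw [Vset, mem_setOf_eq, h0, h1] at hX
      simp at hX
  constructor
  · show 0 < ε * (ε * Real.sqrt (X 0 ^ 2 + X 1 ^ 2))
    rw [← mul_assoc, eps_sq hε, one_mul]
    exact Real.sqrt_pos.mpr hS
  · show ang v₀ X ∈ Set.Ioo (v₀ - π/2) (v₀ + π/2)
    constructor
    · have := Real.neg_pi_div_two_lt_arctan ((X 1 * Real.cos v₀ - X 0 * Real.sin v₀) /
        (X 0 * Real.cos v₀ + X 1 * Real.sin v₀))
      rw [ang]; linarith
    · have := Real.arctan_lt_pi_div_two ((X 1 * Real.cos v₀ - X 0 * Real.sin v₀) /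
        (X 0 * Real.cos v₀ + X 1 * Real.sin v₀))
      rw [ang]; linarith

lemma PsiInv_Psi (hε : ε = 1 ∨ ε = -1) {p : Fin 3 → ℝ} (hp : p ∈ Uset v₀ ε) :
    PsiInv h v₀ ε (Psi h p) = p := by
  obtain ⟨hp0, hp2⟩ := hp
  have hp0ne : p 0 ≠ 0 := fun h0 => by rw [h0, mul_zero] at hp0; exact lt_irrefl 0 hp0
  have hcos : 0 < Real.cos (p 2 - v₀) := by
    apply Real.cos_pos_of_mem_Ioo
    constructor <;> [linarith [hp2.1]; linarith [hp2.2]]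
  have hang : ang v₀ (Psi h p) = p 2 := by
    rw [ang]
    have hnum : (Psi h p) 1 * Real.cos v₀ - (Psi h p) 0 * Real.sin v₀
        = p 0 * Real.sin (p 2 - v₀) := by
      simp [Psi, Real.sin_sub]; ring
    have hden : (Psi h p) 0 * Real.cos v₀ + (Psi h p) 1 * Real.sin v₀
        = p 0 * Real.cos (p 2 - v₀) := by
      simp [Psi, Real.cos_sub]; ring
    rw [hnum, hden]
    have : p 0 * Real.sin (p 2 - v₀) / (p 0 * Real.cos (p 2 - v₀))
        = Real.tan (p 2 - v₀) := by
      rw [Real.tan_eq_sin_div_cos]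
      field_simp
    rw [this, Real.arctan_tan (by linarith [hp2.1]) (by linarith [hp2.2])]
    ring
  funext i
  fin_cases i
  · show ε * Real.sqrt ((Psi h p) 0 ^ 2 + (Psi h p) 1 ^ 2) = p 0
    have : (Psi h p) 0 ^ 2 + (Psi h p) 1 ^ 2 = p 0 ^ 2 := by
      simp [Psi]
      nlinarith [Real.sin_sq_add_cos_sq (p 2)]
    rw [this, Real.sqrt_sq_eq_abs]
    rcases hε with he | he
    · rw [he] at hp0 ⊢
      rw [abs_of_pos (by linarith), one_mul]
    · rw [he] at hp0 ⊢
      have : p 0 < 0 := by nlinarith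
      rw [abs_of_neg this]; ring
  · show (Psi h p) 2 - h * ang v₀ (Psi h p) = p 1
    rw [hang]
    simp [Psi]
  · exact hang


lemma Psi_PsiInv (hε : ε = 1 ∨ ε = -1) {X : Fin 3 → ℝ} (hX : X ∈ Vset v₀ ε) :
    Psi h (PsiInv h v₀ ε X) = X := by
  have hee := eps_sq hε
  set c := Real.cos v₀ with hc
  set s := Real.sin v₀ with hs
  set X' := X 0 * c + X 1 * s with hX'
  set Y' := X 1 * c - X 0 * s with hY'
  have hcs : s ^ 2 + c ^ 2 = 1 := Real.sin_sq_add_cos_sq v₀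
  have hX'pos : 0 < ε * X' := hX
  have hX'ne : X' ≠ 0 := by
    intro h0; rw [h0, mul_zero] at hX'pos; exact lt_irrefl 0 hX'pos
  set S := X 0 ^ 2 + X 1 ^ 2 with hS
  have hSeq : X' ^ 2 + Y' ^ 2 = S := by
    rw [hX', hY', hS]; linear_combination (X 0 ^ 2 + X 1 ^ 2) * hcs
  have hSpos : 0 < S := by nlinarith [sq_nonneg X', sq_nonneg Y']
  have hsqS : 0 < Real.sqrt S := Real.sqrt_pos.mpr hSpos
  have hS2 : Real.sqrt S ^ 2 = S := Real.sq_sqrt hSpos.le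
  have heps2 : ε ^ 2 = 1 := by rw [sq]; exact hee
  have h1t : 1 + (Y' / X') ^ 2 = (Real.sqrt S / (ε * X')) ^ 2 := by
    rw [div_pow, div_pow, mul_pow, hS2, heps2, one_mul]
    field_simp
    linear_combination hSeq
  have hsq1t : Real.sqrt (1 + (Y' / X') ^ 2) = Real.sqrt S / (ε * X') := by
    rw [h1t, Real.sqrt_sq (le_of_lt (div_pos hsqS hX'pos))]
  have hcosat : Real.cos (Real.arctan (Y' / X')) = ε * X' / Real.sqrt S := by
    rw [Real.cos_arctan, hsq1t]
    rw [one_div_div]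
  have hsinat : Real.sin (Real.arctan (Y' / X')) = ε * Y' / Real.sqrt S := by
    rw [Real.sin_arctan, hsq1t]
    have hεne : ε ≠ 0 := by rcases hε with he | he <;> simp [he]
    rw [div_div_div_eq]
    rw [div_eq_div_iff (by positivity) hsqS.ne']
    ring
  have hangX : ang v₀ X = Real.arctan (Y' / X') + v₀ := by rw [ang]
  funext i
  fin_cases i
  · show (ε * Real.sqrt S) * Real.cos (ang v₀ X) = X 0
    rw [hangX, Real.cos_add, hcosat, hsinat, ← hc, ← hs]
    have expand : ε * Real.sqrt S * (ε * X' / Real.sqrt S * c - ε * Y' / Real.sqrt S * s)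
        = (ε * ε) * (X' * c - Y' * s) := by
      field_simp
    rw [expand, hee, one_mul, hX', hY']
    linear_combination X 0 * hcs
  · show (ε * Real.sqrt S) * Real.sin (ang v₀ X) = X 1
    rw [hangX, Real.sin_add, hcosat, hsinat, ← hc, ← hs]
    have expand : ε * Real.sqrt S * (ε * Y' / Real.sqrt S * c + ε * X' / Real.sqrt S * s)
        = (ε * ε) * (Y' * c + X' * s) := by
      field_simp
    rw [expand, hee, one_mul, hX', hY']
    linear_combination X 1 * hcs
  · show (X 2 - h * ang v₀ X) + h * ang v₀ X = X 2
    ring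


lemma sd2_symm {Φ Φinv W W'} (h : SmoothDiffeoOn2 Φ Φinv W W') :
    SmoothDiffeoOn2 Φinv Φ W' W :=
  ⟨h.2.1, h.1, h.2.2.2.1, h.2.2.1, h.2.2.2.2.2, h.2.2.2.2.1⟩

lemma sd2_shrink {Φ Φinv W W'} (h : SmoothDiffeoOn2 Φ Φinv W W')
    (hW' : IsOpen W') {U : Set (ℝ × ℝ)} (hU : IsOpen U) (hUW : U ⊆ W) :
    SmoothDiffeoOn2 Φ Φinv U (W' ∩ Φinv ⁻¹' U) ∧ IsOpen (W' ∩ Φinv ⁻¹' U) := by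
  obtain ⟨hΦ, hΦi, hm, hmi, hl, hr⟩ := h
  constructor
  · refine ⟨hΦ.mono hUW, hΦi.mono inter_subset_left, ?_, ?_, ?_, ?_⟩
    · intro p hp
      exact ⟨hm (hUW hp), by rw [mem_preimage, hl p (hUW hp)]; exact hp⟩
    · intro p hp
      exact hp.2
    · intro p hp; exact hl p (hUW hp)
    · intro p hp; exact hr p hp.1
  · exact hΦi.continuousOn.isOpen_inter_preimage hW' hU

/-- Inverse function theorem packaged for `ℝ × ℝ`. -/
lemma ift2 {Φ : ℝ × ℝ → ℝ × ℝ} {O : Set (ℝ × ℝ)} {a : ℝ × ℝ}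
    (hO : IsOpen O) (ha : a ∈ O) (hΦ : ContDiffOn ℝ (⊤ : ℕ∞) Φ O)
    (A : (ℝ × ℝ) ≃L[ℝ] (ℝ × ℝ)) (hA : HasFDerivAt Φ (A : (ℝ × ℝ) →L[ℝ] (ℝ × ℝ)) a) :
    ∃ W W' Φinv, IsOpen W ∧ IsOpen W' ∧ a ∈ W ∧ Φ a ∈ W' ∧
      SmoothDiffeoOn2 Φ Φinv W W' := by
  have hΦa : ContDiffAt ℝ (⊤ : ℕ∞) Φ a := hΦ.contDiffAt (hO.mem_nhds ha)
  set P := hΦa.toOpenPartialHomeomorph Φ hA (by simp) with hP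
  have hPcoe : (P : ℝ × ℝ → ℝ × ℝ) = Φ := hΦa.toOpenPartialHomeomorph_coe hA (by simp)
  have haP : a ∈ P.source := hΦa.mem_toOpenPartialHomeomorph_source hA (by simp)
  -- the set where fderiv is invertible
  have hfd : ContinuousOn (fderiv ℝ Φ) O := hΦ.continuousOn_fderiv_of_isOpen hO (by simp)
  set Od := O ∩ (fderiv ℝ Φ) ⁻¹' {T : (ℝ × ℝ) →L[ℝ] (ℝ × ℝ) | IsUnit T} with hOd
  have hOdOpen : IsOpen Od := hfd.isOpen_inter_preimage hO Units.isOpen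
  have haOd : a ∈ Od := by
    refine ⟨ha, ?_⟩
    have : fderiv ℝ Φ a = (A : (ℝ × ℝ) →L[ℝ] (ℝ × ℝ)) := hA.fderiv
    rw [mem_preimage, this]
    exact ⟨(ContinuousLinearEquiv.unitsEquiv ℝ (ℝ × ℝ)).symm A, rfl⟩
  set W := P.source ∩ Od with hW
  have hWopen : IsOpen W := P.open_source.inter hOdOpen
  have haW : a ∈ W := ⟨haP, haOd⟩
  set W' := P.target ∩ P.symm ⁻¹' W with hW'
  have hW'open : IsOpen W' := P.symm.continuousOn.isOpen_inter_preimage P.open_target hWopen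
  have hfaW' : Φ a ∈ W' := by
    constructor
    · rw [← hPcoe]; exact P.map_source haP
    · rw [mem_preimage, ← hPcoe, P.left_inv haP]; exact haW
  refine ⟨W, W', P.symm, hWopen, hW'open, haW, hfaW', ?_, ?_, ?_, ?_, ?_, ?_⟩
  · exact hΦ.mono (fun p hp => hp.2.1)
  · -- smoothness of the inverse on W'
    intro y hy
    apply ContDiffAt.contDiffWithinAt
    have hyT : y ∈ P.target := hy.1
    have hz : P.symm y ∈ W := hy.2
    have hzOd : P.symm y ∈ Od := hz.2
    have hdiff : ContDiffAt ℝ (⊤ : ℕ∞) Φ (P.symm y) := hΦ.contDiffAt (hO.mem_nhds hzOd.1)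
    obtain ⟨u, hu⟩ := hzOd.2
    have hfd' : HasFDerivAt Φ (u : (ℝ × ℝ) →L[ℝ] (ℝ × ℝ)) (P.symm y) := by
      rw [hu]
      exact (hdiff.differentiableAt (by simp)).hasFDerivAt
    have hfd'' : HasFDerivAt Φ
        ((ContinuousLinearEquiv.unitsEquiv ℝ (ℝ × ℝ) u : (ℝ × ℝ) ≃L[ℝ] (ℝ × ℝ)) :
          (ℝ × ℝ) →L[ℝ] (ℝ × ℝ)) (P.symm y) := hfd'
    have := P.contDiffAt_symm hyT (by rw [hPcoe]; exact hfd'') (by rw [hPcoe]; exact hdiff)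
    exact this
  · intro p hp
    refine ⟨by rw [← hPcoe]; exact P.map_source hp.1, ?_⟩
    rw [mem_preimage, ← hPcoe, P.left_inv hp.1]
    exact hp
  · intro y hy; exact hy.2
  · intro p hp
    rw [← hPcoe]; exact P.left_inv hp.1
  · intro y hy
    rw [← hPcoe]; exact P.right_inv hy.1



section Backward

open Filter Topology

lemma backward
    (I : Set ℝ) (hIo : IsOpen I)
    (x z : ℝ → ℝ) (hγ : ContDiffOn ℝ (⊤ : ℕ∞) (fun u => (x u, z u)) I)
    (hx : ∀ u ∈ I, x u ≠ 0) (u₀ : ℝ) (hu₀ : u₀ ∈ I) (h : ℝ) (n r : ℕ)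
    (hn : 2 ≤ n) (hr : 2 ≤ r)
    (hsurf : AEquivSurfAt
      (fun p => ![x p.1 * Real.cos p.2, x p.1 * Real.sin p.2, z p.1 + h * p.2]) (u₀, 0) n r) :
    AEquivCurveAt (fun u => (x u, z u)) u₀ n r := by
  classical
  obtain ⟨D, D', φ, φinv, W, W', Φ, Φinv, hD, hD', hpD, h0D', hφSD, hφ0, hW, hW', hfpW,
    h0W', hΦSD, hΦfp, hmain⟩ := hsurf
  set f : ℝ × ℝ → Fin 3 → ℝ :=
    fun p => ![x p.1 * Real.cos p.2, x p.1 * Real.sin p.2, z p.1 + h * p.2] with hf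
  set ε : ℝ := if 0 < x u₀ then 1 else -1 with hεdef
  have hε : ε = 1 ∨ ε = -1 := by
    by_cases hc : 0 < x u₀ <;> simp [hεdef, hc]
  have hεx : 0 < ε * x u₀ := by
    rcases lt_or_gt_of_ne (hx u₀ hu₀) with hlt | hgt
    · have : ε = -1 := by simp [hεdef, not_lt.mpr hlt.le]
      rw [this]; linarith
    · have : ε = 1 := by simp [hεdef, hgt]
      rw [this]; linarith
  set F : ℝ × ℝ → Fin 3 → ℝ := fun q => ![x q.1, z q.1, q.2] with hF
  have hfPsi : ∀ q : ℝ × ℝ, f q = Psi h (F q) := by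
    intro q; funext i; fin_cases i <;> simp [hf, hF, Psi]
  set c₃ : Fin 3 → ℝ := ![x u₀, z u₀, 0] with hc₃
  have hc₃U : c₃ ∈ Uset 0 ε := by
    constructor
    · show 0 < ε * c₃ 0
      simpa [hc₃] using hεx
    · show c₃ 2 ∈ Set.Ioo (0 - π/2) (0 + π/2)
      have := Real.pi_pos
      constructor <;> simp [hc₃] <;> linarith
  have hFc₃ : F (u₀, 0) = c₃ := by funext i; fin_cases i <;> simp [hF, hc₃]
  have hfpV : f (u₀, 0) ∈ Vset 0 ε := by
    rw [hfPsi, hFc₃]; exact mapsTo_Psi hc₃U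
  -- smoothness of γ at u₀
  have hγAt : ContDiffAt ℝ (⊤ : ℕ∞) (fun u => (x u, z u)) u₀ := hγ.contDiffAt (hIo.mem_nhds hu₀)
  have hxAt : ContinuousAt x u₀ := (continuous_fst.continuousAt).comp hγAt.continuousAt
  have hzAt : ContinuousAt z u₀ := (continuous_snd.continuousAt).comp hγAt.continuousAt
  -- continuity of φ at origin
  have hφAt : ContinuousAt φ (0, 0) :=
    (hφSD.1.continuousOn.continuousAt (hD'.mem_nhds h0D'))
  have hφ00 : φ (0, 0) = (u₀, 0) := hφ0
  -- F ∘ φ is continuous at origin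
  have hFAt : ContinuousAt F (u₀, 0) := by
    rw [continuousAt_pi]
    intro i
    fin_cases i
    · exact (hxAt.comp continuous_fst.continuousAt : ContinuousAt (fun y : ℝ × ℝ => x y.1) (u₀, 0))
    · exact (hzAt.comp continuous_fst.continuousAt : ContinuousAt (fun y : ℝ × ℝ => z y.1) (u₀, 0))
    · exact continuous_snd.continuousAt
  have hφT : Tendsto φ (𝓝 (0,0)) (𝓝 (u₀, 0)) := by
    have := hφAt.tendsto
    rwa [hφ00] at this
  have hFφAt : Tendsto (fun q => F (φ q)) (𝓝 (0,0)) (𝓝 c₃) := by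
    rw [← hFc₃]
    exact hFAt.tendsto.comp hφT
  have hfφAt : Tendsto (fun q => f (φ q)) (𝓝 (0,0)) (𝓝 (f (u₀, 0))) := by
    have : Tendsto (Psi h) (𝓝 c₃) (𝓝 (Psi h c₃)) := (contDiff_Psi.continuous).continuousAt
    have h2 := this.comp hFφAt
    have : f (u₀, 0) = Psi h c₃ := by rw [hfPsi, hFc₃]
    rw [this]
    refine h2.congr ?_
    intro q; rw [hfPsi]; rfl
  -- Ξ
  set Ξ : (Fin 3 → ℝ) → Fin 3 → ℝ := fun Y => PsiInv h 0 ε (Φinv Y) with hΞdef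
  have hΦinv0 : Φinv 0 = f (u₀, 0) := by
    rw [← hΦfp]; exact hΦSD.2.2.2.2.1 _ hfpW
  have hΞ0 : Ξ 0 = c₃ := by
    rw [hΞdef]; simp only []
    rw [hΦinv0, hfPsi, hFc₃]
    exact PsiInv_Psi hε hc₃U
  -- key identity
  have hkey : ∀ᶠ q : ℝ × ℝ in 𝓝 (0,0), F (φ q) = Ξ ![q.1 ^ n, q.1 ^ r, q.2] := by
    have e1 : ∀ᶠ q : ℝ × ℝ in 𝓝 (0,0), q ∈ D' := eventually_mem_nhds_iff.mpr
      (hD'.mem_nhds h0D') |>.mono (fun q hq => mem_of_mem_nhds hq)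
    have e2 : ∀ᶠ q : ℝ × ℝ in 𝓝 (0,0), f (φ q) ∈ W := hfφAt.eventually_mem (hW.mem_nhds hfpW)
    have e4 : ∀ᶠ q : ℝ × ℝ in 𝓝 (0,0), F (φ q) ∈ Uset 0 ε :=
      hFφAt.eventually_mem ((isOpen_U).mem_nhds hc₃U)
    filter_upwards [e1, e2, e4] with q hq1 hq2 hq4
    have hΦval := hmain q hq1 hq2
    rw [hΞdef]
    simp only []
    rw [← hΦval, hΦSD.2.2.2.2.1 _ hq2, hfPsi, PsiInv_Psi hε hq4]
  -- Ξ smooth near 0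
  set OΞ := W' ∩ Φinv ⁻¹' (Vset 0 ε) with hOΞ
  have hOΞopen : IsOpen OΞ := hΦSD.2.1.continuousOn.isOpen_inter_preimage hW' isOpen_V
  have h0OΞ : (0 : Fin 3 → ℝ) ∈ OΞ := ⟨h0W', by rw [Set.mem_preimage, hΦinv0]; exact hfpV⟩
  have hΞOn : ContDiffOn ℝ (⊤ : ℕ∞) Ξ OΞ :=
    (contDiffOn_PsiInv hε).comp (hΦSD.2.1.mono Set.inter_subset_left)
      (fun Y hY => hY.2)
  have hΞAt : ContDiffAt ℝ (⊤ : ℕ∞) Ξ 0 := hΞOn.contDiffAt (hOΞopen.mem_nhds h0OΞ)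
  -- Θ and two-sided invertibility of B := fderiv Ξ 0
  set Θ : (Fin 3 → ℝ) → Fin 3 → ℝ := fun X => Φ (Psi h X) with hΘdef
  have hΘAt : ContDiffAt ℝ (⊤ : ℕ∞) Θ c₃ := by
    have h1 : ContDiffAt ℝ (⊤ : ℕ∞) Φ (Psi h c₃) := by
      apply hΦSD.1.contDiffAt
      apply hW.mem_nhds
      rw [← hFc₃, ← hfPsi]; exact hfpW
    exact h1.comp c₃ (contDiff_Psi.contDiffAt)
  have hΘc₃ : Θ c₃ = 0 := by
    rw [hΘdef]; simp only []
    rw [← hFc₃, ← hfPsi]; exact hΦfp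
  have hΘΞ : ∀ᶠ Y : Fin 3 → ℝ in 𝓝 0, Θ (Ξ Y) = Y := by
    have hΦinvAt : ContinuousAt Φinv 0 := hΦSD.2.1.continuousOn.continuousAt (hW'.mem_nhds h0W')
    have e1 : ∀ᶠ Y : Fin 3 → ℝ in 𝓝 0, Φinv Y ∈ Vset 0 ε := by
      apply hΦinvAt.tendsto.eventually_mem
      rw [hΦinv0]; exact isOpen_V.mem_nhds hfpV
    have e2 : ∀ᶠ Y : Fin 3 → ℝ in 𝓝 0, Y ∈ W' := eventually_mem_nhds_iff.mpr
      (hW'.mem_nhds h0W') |>.mono (fun q hq => mem_of_mem_nhds hq)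
    filter_upwards [e1, e2] with Y h1 h2
    rw [hΘdef, hΞdef]; simp only []
    rw [Psi_PsiInv hε h1, hΦSD.2.2.2.2.2 _ h2]
  have hΞΘ : ∀ᶠ X : Fin 3 → ℝ in 𝓝 c₃, Ξ (Θ X) = X := by
    have hPsiAt : ContinuousAt (Psi h) c₃ := contDiff_Psi.continuous.continuousAt
    have e1 : ∀ᶠ X : Fin 3 → ℝ in 𝓝 c₃, Psi h X ∈ W := by
      apply hPsiAt.tendsto.eventually_mem
      apply hW.mem_nhds
      rw [← hFc₃, ← hfPsi]; exact hfpW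
    have e2 : ∀ᶠ X : Fin 3 → ℝ in 𝓝 c₃, X ∈ Uset 0 ε := eventually_mem_nhds_iff.mpr
      (isOpen_U.mem_nhds hc₃U) |>.mono (fun q hq => mem_of_mem_nhds hq)
    filter_upwards [e1, e2] with X h1 h2
    rw [hΘdef, hΞdef]; simp only []
    rw [hΦSD.2.2.2.2.1 _ h1, PsiInv_Psi hε h2]
  set B := fderiv ℝ Ξ 0 with hB
  have hΞdiff : DifferentiableAt ℝ Ξ 0 := hΞAt.differentiableAt (by simp)
  have hΘdiff : DifferentiableAt ℝ Θ c₃ := hΘAt.differentiableAt (by simp)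
  have hABv : ∀ Y : Fin 3 → ℝ, fderiv ℝ Θ c₃ (B Y) = Y := by
    intro Y
    have hcomp : fderiv ℝ (fun Y => Θ (Ξ Y)) 0 = (fderiv ℝ Θ c₃).comp B := by
      have := fderiv_comp (𝕜 := ℝ) 0 (by rw [hΞ0] at *; exact hΘdiff) hΞdiff
      rw [hΞ0] at this
      exact this
    have hid : fderiv ℝ (fun Y => Θ (Ξ Y)) 0 = ContinuousLinearMap.id ℝ (Fin 3 → ℝ) := by
      have : (fun Y => Θ (Ξ Y)) =ᶠ[𝓝 0] id := hΘΞ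
      rw [this.fderiv_eq, fderiv_id]
    rw [hcomp] at hid
    calc fderiv ℝ Θ c₃ (B Y) = ((fderiv ℝ Θ c₃).comp B) Y := rfl
      _ = Y := by rw [hid]; rfl
  have hBinj : Function.Injective B := by
    intro Y₁ Y₂ hY
    have := congrArg (fderiv ℝ Θ c₃) hY
    rwa [hABv, hABv] at this
  -- derivative of φ
  have hφAt' : ContDiffAt ℝ (⊤ : ℕ∞) φ (0,0) := hφSD.1.contDiffAt (hD'.mem_nhds h0D')
  have hφdiff : DifferentiableAt ℝ φ (0,0) := hφAt'.differentiableAt (by simp)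
  set dφ := fderiv ℝ φ (0,0) with hdφ
  have hφinvφ : ∀ᶠ q : ℝ × ℝ in 𝓝 (0,0), φinv (φ q) = q := by
    have e1 : ∀ᶠ q : ℝ × ℝ in 𝓝 (0,0), q ∈ D' := eventually_mem_nhds_iff.mpr
      (hD'.mem_nhds h0D') |>.mono (fun q hq => mem_of_mem_nhds hq)
    filter_upwards [e1] with q hq
    exact hφSD.2.2.2.2.1 _ hq
  have hφinvdiff : DifferentiableAt ℝ φinv (u₀, 0) := by
    have := hφSD.2.1.contDiffAt (hD.mem_nhds hpD)
    exact this.differentiableAt (by simp)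
  have hdφleft : ∀ v : ℝ × ℝ, fderiv ℝ φinv (u₀, 0) (dφ v) = v := by
    intro v
    have hcomp : fderiv ℝ (fun q => φinv (φ q)) (0,0) = (fderiv ℝ φinv (u₀,0)).comp dφ := by
      have := fderiv_comp (𝕜 := ℝ) (0,0) (by rw [hφ00] at *; exact hφinvdiff) hφdiff
      rw [hφ00] at this
      exact this
    have hid : fderiv ℝ (fun q => φinv (φ q)) (0,0) = ContinuousLinearMap.id ℝ (ℝ × ℝ) := by
      have : (fun q => φinv (φ q)) =ᶠ[𝓝 (0,0)] id := hφinvφ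
      rw [this.fderiv_eq, fderiv_id]
    rw [hcomp] at hid
    calc fderiv ℝ φinv (u₀,0) (dφ v) = ((fderiv ℝ φinv (u₀,0)).comp dφ) v := rfl
      _ = v := by rw [hid]; rfl
  have hdφinj : Function.Injective dφ := by
    intro v w hvw
    have := congrArg (fderiv ℝ φinv (u₀, 0)) hvw
    rwa [hdφleft, hdφleft] at this

  -- derivative of the curve
  have hγdiff : DifferentiableAt ℝ (fun u => (x u, z u)) u₀ := hγAt.differentiableAt (by simp)
  set dγ := deriv (fun u => (x u, z u)) u₀ with hdγdef
  have hγ' : HasDerivAt (fun u => (x u, z u)) dγ u₀ := hγdiff.hasDerivAt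
  set fstL := ContinuousLinearMap.fst ℝ ℝ ℝ with hfstL
  set sndL := ContinuousLinearMap.snd ℝ ℝ ℝ with hsndL
  have hx' : HasDerivAt x dγ.1 u₀ := by
    have := fstL.hasFDerivAt.comp_hasDerivAt u₀ hγ'
    exact this
  have hz' : HasDerivAt z dγ.2 u₀ := by
    have := sndL.hasFDerivAt.comp_hasDerivAt u₀ hγ'
    exact this
  set LF : (ℝ × ℝ) →L[ℝ] (Fin 3 → ℝ) :=
    ContinuousLinearMap.pi ![dγ.1 • fstL, dγ.2 • fstL, sndL] with hLF
  have hF' : HasFDerivAt F LF (u₀, 0) := by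
    apply hasFDerivAt_pi''
    intro i
    fin_cases i <;>
      simp only [hLF, ContinuousLinearMap.proj_pi, Matrix.cons_val_zero, Matrix.cons_val_one,
        Matrix.head_cons, Matrix.cons_val_two, Matrix.tail_cons, hF]
    · exact hx'.comp_hasFDerivAt (u₀, 0) fstL.hasFDerivAt
    · exact hz'.comp_hasFDerivAt (u₀, 0) fstL.hasFDerivAt
    · exact sndL.hasFDerivAt
  set Lg : (ℝ × ℝ) →L[ℝ] (Fin 3 → ℝ) := ContinuousLinearMap.pi ![0, 0, sndL] with hLg
  have hg' : HasFDerivAt (fun q : ℝ × ℝ => (![q.1 ^ n, q.1 ^ r, q.2] : Fin 3 → ℝ)) Lg (0, 0) := by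
    apply hasFDerivAt_pi''
    intro i
    have hpow : ∀ m : ℕ, 2 ≤ m →
        HasFDerivAt (fun q : ℝ × ℝ => q.1 ^ m) (0 : (ℝ × ℝ) →L[ℝ] ℝ) (0, 0) := by
      intro m hm
      have h1 : HasDerivAt (fun s : ℝ => s ^ m) 0 0 := by
        have := hasDerivAt_pow m (0 : ℝ)
        simpa [zero_pow (by omega : m - 1 ≠ 0)] using this
      have := h1.comp_hasFDerivAt (0, 0) fstL.hasFDerivAt
      simpa [Function.comp_def, hfstL] using this
    fin_cases i <;>
      simp only [hLg, ContinuousLinearMap.proj_pi, Matrix.cons_val_zero, Matrix.cons_val_one,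
        Matrix.head_cons, Matrix.cons_val_two, Matrix.tail_cons]
    · exact hpow n hn
    · exact hpow r hr
    · exact sndL.hasFDerivAt
  have hφ' : HasFDerivAt φ dφ (0, 0) := hφdiff.hasFDerivAt
  have hFφ' : HasFDerivAt (fun q => F (φ q)) (LF.comp dφ) (0, 0) := by
    have hF'' : HasFDerivAt F LF (φ (0, 0)) := by rw [hφ00]; exact hF'
    exact hF''.comp (0, 0) hφ'
  have hΞg' : HasFDerivAt (fun q : ℝ × ℝ => Ξ ![q.1 ^ n, q.1 ^ r, q.2]) (B.comp Lg) (0, 0) := by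
    have hgmap0 : (![(0:ℝ) ^ n, (0:ℝ) ^ r, (0:ℝ)] : Fin 3 → ℝ) = 0 := by
      funext i
      fin_cases i <;>
        simp [zero_pow (by omega : n ≠ 0), zero_pow (by omega : r ≠ 0)]
    have hΞB' : HasFDerivAt Ξ B (![((0,0) : ℝ × ℝ).1 ^ n, ((0,0) : ℝ × ℝ).1 ^ r,
        ((0,0) : ℝ × ℝ).2] : Fin 3 → ℝ) := by
      have : (![((0,0) : ℝ × ℝ).1 ^ n, ((0,0) : ℝ × ℝ).1 ^ r, ((0,0) : ℝ × ℝ).2] : Fin 3 → ℝ)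
          = 0 := hgmap0
      rw [this]
      exact hΞdiff.hasFDerivAt
    exact hΞB'.comp (0, 0) hg'
  have hFφ'' : HasFDerivAt (fun q => F (φ q)) (B.comp Lg) (0, 0) :=
    hΞg'.congr_of_eventuallyEq hkey
  have heqL : LF.comp dφ = B.comp Lg := hFφ'.unique hFφ''
  set αu := (dφ (1, 0)).1 with hαudef
  set βu := (dφ (1, 0)).2 with hβudef
  set αv := (dφ (0, 1)).1 with hαvdef
  set βv := (dφ (0, 1)).2 with hβvdef
  have hLFapp : ∀ v : ℝ × ℝ, LF v = ![dγ.1 * v.1, dγ.2 * v.1, v.2] := by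
    intro v
    funext i
    fin_cases i <;>
      simp [hLF, ContinuousLinearMap.pi_apply, hfstL, hsndL]
  have hLg10 : Lg ((1 : ℝ), (0 : ℝ)) = 0 := by
    funext i
    fin_cases i <;> simp [hLg, ContinuousLinearMap.pi_apply, hsndL]
  have hLg01 : Lg ((0 : ℝ), (1 : ℝ)) = ![0, 0, 1] := by
    funext i
    fin_cases i <;> simp [hLg, ContinuousLinearMap.pi_apply, hsndL]
  have ev1 : LF (dφ (1, 0)) = 0 := by
    have h1 := congrArg (fun L : (ℝ × ℝ) →L[ℝ] (Fin 3 → ℝ) => L (1, 0)) heqL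
    simp only [ContinuousLinearMap.comp_apply] at h1
    rw [h1, hLg10, map_zero]
  have ev2 : LF (dφ (0, 1)) = B ![0, 0, 1] := by
    have h1 := congrArg (fun L : (ℝ × ℝ) →L[ℝ] (Fin 3 → ℝ) => L (0, 1)) heqL
    simp only [ContinuousLinearMap.comp_apply] at h1
    rw [h1, hLg01]
  have hβu : βu = 0 := by
    have := congrFun ev1 2
    rw [hLFapp] at this
    simpa [hβudef] using this
  have e10 : dγ.1 * αu = 0 := by
    have := congrFun ev1 0
    rw [hLFapp] at this
    simpa [hαudef] using this
  have e20 : dγ.2 * αu = 0 := by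
    have := congrFun ev1 1
    rw [hLFapp] at this
    simpa [hαudef] using this
  have hαune : αu ≠ 0 := by
    intro h0
    have h1 : dφ (1, 0) = dφ 0 := by
      rw [map_zero]
      have := Prod.mk.eta (p := dφ (1, 0))
      rw [← this, ← hαudef, ← hβudef, h0, hβu]
      rfl
    have := hdφinj h1
    simp [Prod.ext_iff] at this
  have hdγ1 : dγ.1 = 0 := by
    rcases mul_eq_zero.mp e10 with h1 | h1
    · exact h1
    · exact absurd h1 hαune
  have hdγ2 : dγ.2 = 0 := by
    rcases mul_eq_zero.mp e20 with h1 | h1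
    · exact h1
    · exact absurd h1 hαune
  have hβvne : βv ≠ 0 := by
    have hsurj : Function.Surjective dφ := by
      have hinj : Function.Injective (dφ : (ℝ × ℝ) →ₗ[ℝ] (ℝ × ℝ)) := hdφinj
      exact LinearMap.injective_iff_surjective.mp hinj
    obtain ⟨w, hw⟩ := hsurj (0, 1)
    have hwdec : w = w.1 • ((1:ℝ), (0:ℝ)) + w.2 • ((0:ℝ), (1:ℝ)) := by
      ext <;> simp
    have hlin : dφ w = w.1 • dφ (1, 0) + w.2 • dφ (0, 1) := by
      conv_lhs => rw [hwdec]
      rw [map_add, map_smul, map_smul]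
    rw [hw] at hlin
    have h2 := congrArg Prod.snd hlin
    simp only [Prod.snd_add, Prod.smul_snd, smul_eq_mul] at h2
    rw [← hβudef, ← hβvdef, hβu] at h2
    intro h0
    rw [h0] at h2
    simp at h2
  have hBe3 : B ![0, 0, 1] = ![0, 0, βv] := by
    rw [← ev2, hLFapp]
    funext i
    fin_cases i <;> simp [hdγ1, hdγ2, hβvdef]

  -- the 2x2 block of B
  set pc : (Fin 3 → ℝ) →L[ℝ] ℝ × ℝ :=
    (ContinuousLinearMap.proj 0).prod (ContinuousLinearMap.proj 1) with hpc
  set jc : (ℝ × ℝ) →L[ℝ] (Fin 3 → ℝ) := ContinuousLinearMap.pi ![fstL, sndL, 0] with hjcdef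
  have hjc : ∀ q : ℝ × ℝ, jc q = ![q.1, q.2, 0] := by
    intro q
    funext i
    fin_cases i <;> simp [hjcdef, ContinuousLinearMap.pi_apply, hfstL, hsndL]
  set Bhat := pc.comp (B.comp jc) with hBhatdef
  have hBhatapp : ∀ v : ℝ × ℝ, Bhat v = ((B (jc v)) 0, (B (jc v)) 1) := fun v => rfl
  have hBhat_inj : Function.Injective Bhat := by
    have hker : ∀ v : ℝ × ℝ, Bhat v = 0 → v = 0 := by
      intro v hv
      have h0 : (B (jc v)) 0 = 0 := by
        have := congrArg Prod.fst hv
        rwa [hBhatapp] at this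
      have h1 : (B (jc v)) 1 = 0 := by
        have := congrArg Prod.snd hv
        rwa [hBhatapp] at this
      have hBjc : B (jc v) = B (((B (jc v)) 2 / βv) • ![0, 0, 1]) := by
        rw [map_smul, hBe3]
        funext i
        fin_cases i <;> simp [h0, h1]
        field_simp
      have hjceq := hBinj hBjc
      have hv1 : v.1 = 0 := by
        have := congrFun hjceq 0
        rw [hjc] at this
        simpa using this
      have hv2 : v.2 = 0 := by
        have := congrFun hjceq 1
        rw [hjc] at this
        simpa using this
      ext
      · exact hv1
      · exact hv2
    intro a b hab
    have h1 : Bhat (a - b) = 0 := by rw [map_sub, hab, sub_self]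
    have := hker _ h1
    have := sub_eq_zero.mp this
    exact this
  have hBhat_surj : Function.Surjective Bhat := by
    have hinj : Function.Injective (Bhat : (ℝ × ℝ) →ₗ[ℝ] (ℝ × ℝ)) := hBhat_inj
    exact LinearMap.injective_iff_surjective.mp hinj
  set BhatE : (ℝ × ℝ) ≃L[ℝ] (ℝ × ℝ) :=
    LinearEquiv.toContinuousLinearEquiv
      (LinearEquiv.ofBijective (Bhat : (ℝ × ℝ) →ₗ[ℝ] (ℝ × ℝ)) ⟨hBhat_inj, hBhat_surj⟩) with hBhatE
  have hBhatEcoe : (BhatE : (ℝ × ℝ) →L[ℝ] (ℝ × ℝ)) = Bhat := by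
    apply ContinuousLinearMap.ext
    intro v
    rfl
  -- Ξhat
  set Ξhat : ℝ × ℝ → ℝ × ℝ :=
    fun q => ((Ξ ![q.1, q.2, 0]) 0, (Ξ ![q.1, q.2, 0]) 1) with hΞhatdef
  have hjceq : (fun q : ℝ × ℝ => (![q.1, q.2, 0] : Fin 3 → ℝ)) = jc :=
    funext fun q => (hjc q).symm
  have hj00 : (![(0:ℝ), 0, 0] : Fin 3 → ℝ) = 0 := by
    funext i
    fin_cases i <;> rfl
  have hΞhatB : HasFDerivAt Ξhat Bhat (0, 0) := by
    have hjcF : HasFDerivAt (fun q : ℝ × ℝ => (![q.1, q.2, 0] : Fin 3 → ℝ)) jc (0, 0) := by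
      rw [hjceq]
      exact jc.hasFDerivAt
    have hΞB' : HasFDerivAt Ξ B (![((0:ℝ), (0:ℝ)).1, ((0:ℝ), (0:ℝ)).2, 0] : Fin 3 → ℝ) := by
      have h0 : (![((0:ℝ), (0:ℝ)).1, ((0:ℝ), (0:ℝ)).2, 0] : Fin 3 → ℝ) = 0 := hj00
      rw [h0]
      exact hΞdiff.hasFDerivAt
    have hcomp := hΞB'.comp ((0:ℝ), (0:ℝ)) hjcF
    have hfinal := (pc.hasFDerivAt (x := Ξ ![((0:ℝ), (0:ℝ)).1, ((0:ℝ), (0:ℝ)).2, 0])).comp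
      ((0:ℝ), (0:ℝ)) hcomp
    exact hfinal
  have hΞhat00 : Ξhat (0, 0) = (x u₀, z u₀) := by
    rw [hΞhatdef]
    simp only []
    have h1 : (![((0:ℝ), (0:ℝ)).1, ((0:ℝ), (0:ℝ)).2, 0] : Fin 3 → ℝ) = 0 := hj00
    rw [h1, hΞ0]
    rfl
  -- smoothness of Ξhat
  set O₂ := (fun q : ℝ × ℝ => (![q.1, q.2, 0] : Fin 3 → ℝ)) ⁻¹' OΞ with hO₂def
  have hO₂open : IsOpen O₂ := by
    apply hOΞopen.preimage
    rw [hjceq]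
    exact jc.continuous
  have h0O₂ : ((0:ℝ), (0:ℝ)) ∈ O₂ := by
    rw [hO₂def]
    show (![((0:ℝ), (0:ℝ)).1, ((0:ℝ), (0:ℝ)).2, 0] : Fin 3 → ℝ) ∈ OΞ
    rw [hj00]
    exact h0OΞ
  have hΞhatOn : ContDiffOn ℝ (⊤ : ℕ∞) Ξhat O₂ := by
    have h1 : ContDiffOn ℝ (⊤ : ℕ∞) (fun q : ℝ × ℝ => Ξ (![q.1, q.2, 0] : Fin 3 → ℝ)) O₂ := by
      apply hΞOn.comp
      · rw [hjceq]
        exact jc.contDiff.contDiffOn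
      · intro q hq
        exact hq
    exact ((contDiffOn_pi.mp h1) 0).prodMk ((contDiffOn_pi.mp h1) 1)
  obtain ⟨Wa, Wb, Ξhatinv, hWaopen, hWbopen, h0Wa, hImWb, hSDa⟩ :=
    ift2 hO₂open h0O₂ hΞhatOn BhatE (by rw [hBhatEcoe]; exact hΞhatB)
  -- the curve reparametrisation ψ
  set ψ : ℝ → ℝ := fun t => (φ (t, 0)).1 with hψdef
  set O₃ := {t : ℝ | (t, 0) ∈ D'} with hO₃def
  have hO₃open : IsOpen O₃ := hD'.preimage (continuous_id.prodMk continuous_const)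
  have h0O₃ : (0:ℝ) ∈ O₃ := h0D'
  have hψOn : ContDiffOn ℝ (⊤ : ℕ∞) ψ O₃ := by
    have h1 : ContDiffOn ℝ (⊤ : ℕ∞) (fun t : ℝ => φ (t, 0)) O₃ := by
      apply hφSD.1.comp
      · exact (contDiff_id.prodMk contDiff_const).contDiffOn
      · intro t ht
        exact ht
    exact h1.fst
  have hι : HasDerivAt (fun t : ℝ => ((t, (0:ℝ)) : ℝ × ℝ)) (1, 0) 0 :=
    (hasDerivAt_id 0).prodMk (hasDerivAt_const 0 0)
  have hφι : HasDerivAt (fun t : ℝ => φ (t, 0)) (dφ (1, 0)) 0 := by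
    have hc : HasFDerivAt (fun t : ℝ => φ (t, 0))
        (dφ.comp ((1 : ℝ →L[ℝ] ℝ).smulRight ((1:ℝ), (0:ℝ)))) 0 :=
      HasFDerivAt.comp (𝕜 := ℝ) (f := fun t : ℝ => ((t, (0:ℝ)) : ℝ × ℝ)) 0 hφ' hι.hasFDerivAt
    rw [hasDerivAt_iff_hasFDerivAt]
    have hCLM : dφ.comp ((1 : ℝ →L[ℝ] ℝ).smulRight ((1:ℝ), (0:ℝ)))
        = (1 : ℝ →L[ℝ] ℝ).smulRight (dφ (1, 0)) := by
      apply ContinuousLinearMap.ext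
      intro s
      simp only [ContinuousLinearMap.coe_comp', Function.comp_apply,
        ContinuousLinearMap.smulRight_apply, ContinuousLinearMap.one_apply, ← map_smul]
    rwa [hCLM] at hc
  have hψ'0 : HasDerivAt ψ αu 0 := by
    have h1 : HasFDerivAt (fun p : ℝ × ℝ => p.1) fstL (φ ((0:ℝ), (0:ℝ))) := fstL.hasFDerivAt
    have := h1.comp_hasDerivAt 0 hφι
    exact this
  have hderiv0 : deriv ψ 0 = αu := hψ'0.deriv
  have hdψcont : ContinuousOn (deriv ψ) O₃ :=
    hψOn.continuousOn_deriv_of_isOpen hO₃open (by simp)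
  set O₄ := O₃ ∩ (deriv ψ) ⁻¹' {s : ℝ | s ≠ 0} with hO₄def
  have hO₄open : IsOpen O₄ :=
    hdψcont.isOpen_inter_preimage hO₃open isOpen_ne
  have h0O₄ : (0:ℝ) ∈ O₄ := ⟨h0O₃, by rw [Set.mem_preimage, hderiv0]; exact hαune⟩
  -- eventual conditions in t
  have htι : Tendsto (fun t : ℝ => ((t, (0:ℝ)) : ℝ × ℝ)) (𝓝 0) (𝓝 (0, 0)) := by
    have := (continuous_id.prodMk (continuous_const (y := (0:ℝ)))).continuousAt (x := (0:ℝ))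
    exact this
  have C1 : ∀ᶠ t : ℝ in 𝓝 0, F (φ (t, 0)) = Ξ ![t ^ n, t ^ r, 0] := by
    have := htι.eventually hkey
    filter_upwards [this] with t ht
    exact ht
  have C2 : ∀ᶠ t : ℝ in 𝓝 0, (t ^ n, t ^ r) ∈ Wa := by
    have hc : Tendsto (fun t : ℝ => ((t ^ n, t ^ r) : ℝ × ℝ)) (𝓝 0) (𝓝 (0, 0)) := by
      have h1 : ContinuousAt (fun t : ℝ => ((t ^ n, t ^ r) : ℝ × ℝ)) 0 :=
        ((continuous_pow n).prodMk (continuous_pow r)).continuousAt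
      have h2 : (fun t : ℝ => ((t ^ n, t ^ r) : ℝ × ℝ)) 0 = (0, 0) := by
        simp [zero_pow (by omega : n ≠ 0), zero_pow (by omega : r ≠ 0)]
      rw [← h2]
      exact h1
    exact hc.eventually_mem (hWaopen.mem_nhds h0Wa)
  have C3 : ∀ᶠ t : ℝ in 𝓝 0, t ∈ O₄ := eventually_mem_nhds_iff.mpr
    (hO₄open.mem_nhds h0O₄) |>.mono (fun q hq => mem_of_mem_nhds hq)
  obtain ⟨a, b, hab, habsub⟩ := mem_nhds_iff_exists_Ioo_subset.mp (C1.and (C2.and C3))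
  refine ⟨a, b, ψ, Wb, Wa, Ξhatinv, Ξhat, hab.1, hab.2, ?_, ?_, ?_, hWbopen, hWaopen,
    ?_, h0Wa, sd2_symm hSDa, ?_, ?_⟩
  · exact hψOn.mono (fun t ht => ((habsub ht).2.2).1)
  · show (φ (0, 0)).1 = u₀
    rw [hφ00]
  · intro t ht
    exact ((habsub ht).2.2).2
  · show (x u₀, z u₀) ∈ Wb
    rw [← hΞhat00]
    exact hImWb
  · show Ξhatinv (x u₀, z u₀) = (0, 0)
    rw [← hΞhat00]
    exact hSDa.2.2.2.2.1 _ h0Wa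
  · intro t ht _
    obtain ⟨hC1, hC2, _⟩ := habsub ht
    have hγψ : ((fun u => (x u, z u)) (ψ t) : ℝ × ℝ) = Ξhat (t ^ n, t ^ r) := by
      have h0 := congrFun hC1 0
      have h1 := congrFun hC1 1
      simp only [hF, Matrix.cons_val_zero, Matrix.cons_val_one, Matrix.head_cons] at h0 h1
      rw [hΞhatdef]
      simp only []
      exact Prod.ext h0 h1
    rw [hγψ]
    exact hSDa.2.2.2.2.1 _ hC2




end Backward



section Forward

open Filter Topology

lemma forward
    (I : Set ℝ) (hIo : IsOpen I)
    (x z : ℝ → ℝ) (hγ : ContDiffOn ℝ (⊤ : ℕ∞) (fun u => (x u, z u)) I)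
    (hx : ∀ u ∈ I, x u ≠ 0) (u₀ : ℝ) (hu₀ : u₀ ∈ I) (h : ℝ) (n r : ℕ)
    (hcurve : AEquivCurveAt (fun u => (x u, z u)) u₀ n r) (v₀ : ℝ) :
    AEquivSurfAt
      (fun p => ![x p.1 * Real.cos p.2, x p.1 * Real.sin p.2, z p.1 + h * p.2])
      (u₀, v₀) n r := by
  classical
  obtain ⟨a, b, φc, Wc, Wc', Φc, Φcinv, ha, hb, hφcOn, hφc0, hφc', hWcOpen, hWc'Open,
    hγWc, h0Wc', hΦcSD, hΦcγ, hcmain⟩ := hcurve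
  set f : ℝ × ℝ → Fin 3 → ℝ :=
    fun p => ![x p.1 * Real.cos p.2, x p.1 * Real.sin p.2, z p.1 + h * p.2] with hf
  set ε : ℝ := if 0 < x u₀ then 1 else -1 with hεdef
  have hε : ε = 1 ∨ ε = -1 := by
    by_cases hc : 0 < x u₀ <;> simp [hεdef, hc]
  have hεx : 0 < ε * x u₀ := by
    rcases lt_or_gt_of_ne (hx u₀ hu₀) with hlt | hgt
    · have : ε = -1 := by simp [hεdef, not_lt.mpr hlt.le]
      rw [this]; linarith
    · have : ε = 1 := by simp [hεdef, hgt]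
      rw [this]; linarith
  have hπ2 : 0 < π / 2 := by have := Real.pi_pos; linarith
  set F : ℝ × ℝ → Fin 3 → ℝ := fun q => ![x q.1, z q.1, q.2] with hF
  have hfPsi : ∀ q : ℝ × ℝ, f q = Psi h (F q) := by
    intro q; funext i; fin_cases i <;> simp [hf, hF, Psi]
  -- shrink the curve diffeo to the ε-positive half-plane
  set Uc := Wc ∩ {p : ℝ × ℝ | 0 < ε * p.1} with hUcdef
  have hUcOpen : IsOpen Uc :=
    hWcOpen.inter (isOpen_lt continuous_const (continuous_const.mul continuous_fst))
  have hγUc : ((fun u => (x u, z u)) u₀ : ℝ × ℝ) ∈ Uc := ⟨hγWc, hεx⟩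
  obtain ⟨hSDc, hUc'Open⟩ := sd2_shrink hΦcSD hWc'Open hUcOpen Set.inter_subset_left
  set Uc' := Wc' ∩ Φcinv ⁻¹' Uc with hUc'def
  have h0Uc' : ((0, 0) : ℝ × ℝ) ∈ Uc' := by
    refine ⟨h0Wc', ?_⟩
    rw [Set.mem_preimage, ← hΦcγ, hΦcSD.2.2.2.2.1 _ hγWc]
    exact hγUc
  -- the ambient 3d diffeo
  set PI : (Fin 3 → ℝ) → Fin 3 → ℝ := PsiInv h v₀ ε with hPI
  set Φt : (Fin 3 → ℝ) → Fin 3 → ℝ :=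
    fun X => ![(Φc ((PI X) 0, (PI X) 1)).1, (Φc ((PI X) 0, (PI X) 1)).2, (PI X) 2 - v₀]
    with hΦt
  set Φtinv : (Fin 3 → ℝ) → Fin 3 → ℝ :=
    fun Y => Psi h ![(Φcinv (Y 0, Y 1)).1, (Φcinv (Y 0, Y 1)).2, Y 2 + v₀] with hΦtinv
  set Wt := {X : Fin 3 → ℝ | X ∈ Vset v₀ ε ∧ ((PI X) 0, (PI X) 1) ∈ Uc} with hWt
  set Wt' := {Y : Fin 3 → ℝ | (Y 0, Y 1) ∈ Uc' ∧ Y 2 ∈ Set.Ioo (-(π/2)) (π/2)} with hWt'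
  have hPIcont : ContinuousOn (fun X => ((PI X) 0, (PI X) 1)) (Vset v₀ ε) := by
    have h1 := (contDiffOn_PsiInv (h := h) (v₀ := v₀) hε).continuousOn
    exact ((continuous_apply 0).comp_continuousOn h1).prodMk
      ((continuous_apply 1).comp_continuousOn h1)
  have hWtOpen : IsOpen Wt :=
    hPIcont.isOpen_inter_preimage isOpen_V hUcOpen
  have hWt'Open : IsOpen Wt' := by
    have h1 : IsOpen {Y : Fin 3 → ℝ | (Y 0, Y 1) ∈ Uc'} :=
      hUc'Open.preimage ((continuous_apply 0).prodMk (continuous_apply 1))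
    have h2 : IsOpen {Y : Fin 3 → ℝ | Y 2 ∈ Set.Ioo (-(π/2)) (π/2)} :=
      isOpen_Ioo.preimage (continuous_apply 2)
    exact h1.inter h2
  set c₃ : Fin 3 → ℝ := ![x u₀, z u₀, v₀] with hc₃
  have hc₃U : c₃ ∈ Uset v₀ ε := by
    constructor
    · show 0 < ε * c₃ 0
      simpa [hc₃] using hεx
    · show c₃ 2 ∈ Set.Ioo (v₀ - π/2) (v₀ + π/2)
      constructor <;> simp [hc₃] <;> linarith
  have hFc₃ : F (u₀, v₀) = c₃ := by funext i; fin_cases i <;> simp [hF, hc₃]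
  have hfpPsi : f (u₀, v₀) = Psi h c₃ := by rw [hfPsi, hFc₃]
  have hPIfp : PI (f (u₀, v₀)) = c₃ := by rw [hfpPsi, hPI]; exact PsiInv_Psi hε hc₃U
  have hfpWt : f (u₀, v₀) ∈ Wt := by
    constructor
    · rw [hfpPsi]; exact mapsTo_Psi hc₃U
    · rw [hPIfp]
      show ((x u₀, z u₀) : ℝ × ℝ) ∈ Uc
      exact hγUc
  have h0Wt' : (0 : Fin 3 → ℝ) ∈ Wt' := by
    constructor
    · show ((0, 0) : ℝ × ℝ) ∈ Uc'
      exact h0Uc'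
    · show (0 : ℝ) ∈ Set.Ioo (-(π/2)) (π/2)
      constructor <;> simp <;> linarith
  have hΦtfp : Φt (f (u₀, v₀)) = 0 := by
    rw [hΦt]
    simp only []
    rw [hPIfp]
    have hpair : ((c₃ 0, c₃ 1) : ℝ × ℝ) = ((fun u => (x u, z u)) u₀ : ℝ × ℝ) := by
      simp [hc₃]
    rw [hpair, hΦcγ]
    funext i
    fin_cases i <;> simp [hc₃]
  -- SmoothDiffeoOn3
  have hSD3 : SmoothDiffeoOn3 Φt Φtinv Wt Wt' := by
    refine ⟨?_, ?_, ?_, ?_, ?_, ?_⟩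
    · -- smoothness of Φt
      rw [contDiffOn_pi]
      intro i
      have hPIW : ContDiffOn ℝ (⊤ : ℕ∞) PI Wt := (contDiffOn_PsiInv hε).mono (fun X hX => hX.1)
      have hpairOn : ContDiffOn ℝ (⊤ : ℕ∞) (fun X => ((PI X) 0, (PI X) 1)) Wt :=
        ((contDiffOn_pi.mp hPIW) 0).prodMk ((contDiffOn_pi.mp hPIW) 1)
      have hcomp : ContDiffOn ℝ (⊤ : ℕ∞) (fun X => Φc ((PI X) 0, (PI X) 1)) Wt :=
        hSDc.1.comp hpairOn (fun X hX => hX.2)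
      fin_cases i
      · exact contDiff_fst.comp_contDiffOn hcomp
      · exact contDiff_snd.comp_contDiffOn hcomp
      · exact ((contDiffOn_pi.mp hPIW) 2).sub contDiffOn_const
    · -- smoothness of Φtinv
      have hinner : ContDiffOn ℝ (⊤ : ℕ∞)
          (fun Y : Fin 3 → ℝ => (![(Φcinv (Y 0, Y 1)).1, (Φcinv (Y 0, Y 1)).2, Y 2 + v₀] :
            Fin 3 → ℝ)) Wt' := by
        rw [contDiffOn_pi]
        intro i
        have hpairOn : ContDiffOn ℝ (⊤ : ℕ∞) (fun Y : Fin 3 → ℝ => ((Y 0, Y 1) : ℝ × ℝ)) Wt' :=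
          ((contDiff_apply ℝ ℝ 0).contDiffOn).prodMk ((contDiff_apply ℝ ℝ 1).contDiffOn)
        have hcomp : ContDiffOn ℝ (⊤ : ℕ∞) (fun Y : Fin 3 → ℝ => Φcinv (Y 0, Y 1)) Wt' :=
          hSDc.2.1.comp hpairOn (fun Y hY => hY.1)
        fin_cases i
        · exact contDiff_fst.comp_contDiffOn hcomp
        · exact contDiff_snd.comp_contDiffOn hcomp
        · exact ((contDiff_apply ℝ ℝ 2).contDiffOn).add contDiffOn_const
      exact contDiff_Psi.comp_contDiffOn hinner
    · -- MapsTo Φt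
      intro X hX
      constructor
      · show ((Φt X) 0, (Φt X) 1) ∈ Uc'
        have : ((Φt X) 0, (Φt X) 1) = Φc ((PI X) 0, (PI X) 1) := by
          rw [hΦt]; simp
        rw [this]
        exact hSDc.2.2.1 hX.2
      · show (Φt X) 2 ∈ Set.Ioo (-(π/2)) (π/2)
        have h2 : (Φt X) 2 = ang v₀ X - v₀ := by rw [hΦt, hPI]; simp [PsiInv]
        rw [h2, ang]
        have h3 := Real.neg_pi_div_two_lt_arctan ((X 1 * Real.cos v₀ - X 0 * Real.sin v₀) /
          (X 0 * Real.cos v₀ + X 1 * Real.sin v₀))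
        have h4 := Real.arctan_lt_pi_div_two ((X 1 * Real.cos v₀ - X 0 * Real.sin v₀) /
          (X 0 * Real.cos v₀ + X 1 * Real.sin v₀))
        constructor <;> simp <;> linarith
    · -- MapsTo Φtinv
      intro Y hY
      have hQ : Φcinv (Y 0, Y 1) ∈ Uc := hSDc.2.2.2.1 hY.1
      have hqU : (![(Φcinv (Y 0, Y 1)).1, (Φcinv (Y 0, Y 1)).2, Y 2 + v₀] : Fin 3 → ℝ)
          ∈ Uset v₀ ε := by
        constructor
        · show 0 < ε * (![(Φcinv (Y 0, Y 1)).1, (Φcinv (Y 0, Y 1)).2, Y 2 + v₀] :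
            Fin 3 → ℝ) 0
          simpa using hQ.2
        · show (![(Φcinv (Y 0, Y 1)).1, (Φcinv (Y 0, Y 1)).2, Y 2 + v₀] :
            Fin 3 → ℝ) 2 ∈ Set.Ioo (v₀ - π/2) (v₀ + π/2)
          have := hY.2
          simp only [Set.mem_Ioo] at this ⊢
          simp only [Matrix.cons_val_two, Matrix.tail_cons, Matrix.head_cons]
          constructor <;> linarith [this.1, this.2]
      constructor
      · exact mapsTo_Psi hqU
      · rw [hΦtinv]
        simp only []
        rw [hPI, PsiInv_Psi hε hqU]
        have : ((![(Φcinv (Y 0, Y 1)).1, (Φcinv (Y 0, Y 1)).2, Y 2 + v₀] : Fin 3 → ℝ) 0,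
            (![(Φcinv (Y 0, Y 1)).1, (Φcinv (Y 0, Y 1)).2, Y 2 + v₀] : Fin 3 → ℝ) 1)
            = Φcinv (Y 0, Y 1) := by simp
        rw [this]
        exact hQ
    · -- left inverse
      intro X hX
      have hPX : ((PI X) 0, (PI X) 1) ∈ Uc := hX.2
      rw [hΦt]
      simp only []
      rw [hΦtinv]
      simp only []
      have e0 : ((![(Φc ((PI X) 0, (PI X) 1)).1, (Φc ((PI X) 0, (PI X) 1)).2,
          (PI X) 2 - v₀] : Fin 3 → ℝ) 0,
          (![(Φc ((PI X) 0, (PI X) 1)).1, (Φc ((PI X) 0, (PI X) 1)).2,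
          (PI X) 2 - v₀] : Fin 3 → ℝ) 1) = Φc ((PI X) 0, (PI X) 1) := by simp
      rw [e0, hSDc.2.2.2.2.1 _ hPX]
      have e1 : (![((PI X) 0, (PI X) 1).1, ((PI X) 0, (PI X) 1).2,
          (![(Φc ((PI X) 0, (PI X) 1)).1, (Φc ((PI X) 0, (PI X) 1)).2,
          (PI X) 2 - v₀] : Fin 3 → ℝ) 2 + v₀] : Fin 3 → ℝ) = PI X := by
        funext i
        fin_cases i <;> simp [hPI, PsiInv]
      rw [e1, hPI]
      exact Psi_PsiInv hε hX.1
    · -- right inverse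
      intro Y hY
      have hQ : Φcinv (Y 0, Y 1) ∈ Uc := hSDc.2.2.2.1 hY.1
      have hqU : (![(Φcinv (Y 0, Y 1)).1, (Φcinv (Y 0, Y 1)).2, Y 2 + v₀] : Fin 3 → ℝ)
          ∈ Uset v₀ ε := by
        constructor
        · show 0 < ε * (![(Φcinv (Y 0, Y 1)).1, (Φcinv (Y 0, Y 1)).2, Y 2 + v₀] :
            Fin 3 → ℝ) 0
          simpa using hQ.2
        · show (![(Φcinv (Y 0, Y 1)).1, (Φcinv (Y 0, Y 1)).2, Y 2 + v₀] :
            Fin 3 → ℝ) 2 ∈ Set.Ioo (v₀ - π/2) (v₀ + π/2)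
          have := hY.2
          simp only [Set.mem_Ioo] at this ⊢
          simp only [Matrix.cons_val_two, Matrix.tail_cons, Matrix.head_cons]
          constructor <;> linarith [this.1, this.2]
      rw [hΦtinv]
      simp only []
      rw [hΦt]
      simp only []
      rw [hPI, PsiInv_Psi hε hqU]
      have e0 : ((![(Φcinv (Y 0, Y 1)).1, (Φcinv (Y 0, Y 1)).2, Y 2 + v₀] : Fin 3 → ℝ) 0,
          (![(Φcinv (Y 0, Y 1)).1, (Φcinv (Y 0, Y 1)).2, Y 2 + v₀] : Fin 3 → ℝ) 1)
          = Φcinv (Y 0, Y 1) := by simp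
      rw [e0, hSDc.2.2.2.2.2 _ hY.1]
      funext i
      fin_cases i <;> simp

  -- source diffeo
  set φt : ℝ × ℝ → ℝ × ℝ := fun q => (φc q.1, q.2 + v₀) with hφtdef
  have hφt00 : φt (0, 0) = (u₀, v₀) := by
    rw [hφtdef]
    simp [hφc0]
  set O₅ := {q : ℝ × ℝ | q.1 ∈ Set.Ioo a b} with hO₅def
  have hO₅Open : IsOpen O₅ := isOpen_Ioo.preimage continuous_fst
  have h0O₅ : ((0, 0) : ℝ × ℝ) ∈ O₅ := ⟨ha, hb⟩
  have hφtOn : ContDiffOn ℝ (⊤ : ℕ∞) φt O₅ := by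
    refine ContDiffOn.prodMk ?_ ?_
    · exact hφcOn.comp contDiff_fst.contDiffOn (fun q hq => hq)
    · exact (contDiff_snd.add contDiff_const).contDiffOn
  set c : ℝ := deriv φc 0 with hcdef
  have hcne : c ≠ 0 := hφc' 0 ⟨ha, hb⟩
  have hφcAt : ContDiffAt ℝ (⊤ : ℕ∞) φc 0 := hφcOn.contDiffAt (isOpen_Ioo.mem_nhds ⟨ha, hb⟩)
  have hφc'0 : HasDerivAt φc c 0 := by
    rw [hcdef]
    exact (hφcAt.differentiableAt (by simp)).hasDerivAt
  set fstL := ContinuousLinearMap.fst ℝ ℝ ℝ with hfstL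
  set sndL := ContinuousLinearMap.snd ℝ ℝ ℝ with hsndL
  set Aφ : (ℝ × ℝ) →L[ℝ] ℝ × ℝ := (c • fstL).prod sndL with hAφ
  have hAφapp : ∀ v : ℝ × ℝ, Aφ v = (c * v.1, v.2) := fun v => rfl
  have hAφinj : Function.Injective Aφ := by
    intro v w hvw
    rw [hAφapp, hAφapp, Prod.mk.injEq] at hvw
    have h1 : v.1 = w.1 := by
      have := hvw.1
      field_simp at this
      tauto
    exact Prod.ext h1 hvw.2
  have hAφsurj : Function.Surjective Aφ := by
    have hinj : Function.Injective (Aφ : (ℝ × ℝ) →ₗ[ℝ] (ℝ × ℝ)) := hAφinj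
    exact LinearMap.injective_iff_surjective.mp hinj
  set AφE : (ℝ × ℝ) ≃L[ℝ] (ℝ × ℝ) :=
    LinearEquiv.toContinuousLinearEquiv
      (LinearEquiv.ofBijective (Aφ : (ℝ × ℝ) →ₗ[ℝ] (ℝ × ℝ)) ⟨hAφinj, hAφsurj⟩) with hAφE
  have hAφEcoe : (AφE : (ℝ × ℝ) →L[ℝ] (ℝ × ℝ)) = Aφ := by
    apply ContinuousLinearMap.ext
    intro v
    rfl
  have hφtA : HasFDerivAt φt Aφ (0, 0) := by
    refine HasFDerivAt.prodMk ?_ ?_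
    · exact hφc'0.comp_hasFDerivAt ((0, 0) : ℝ × ℝ) fstL.hasFDerivAt
    · exact sndL.hasFDerivAt.add_const v₀
  obtain ⟨Ds, Dt, φtinv, hDsOpen, hDtOpen, h0Ds, hφt0Dt, hSDφ⟩ :=
    ift2 hO₅Open h0O₅ hφtOn AφE (by rw [hAφEcoe]; exact hφtA)
  -- the good source neighbourhood
  set O₆ := Set.Ioo a b ∩ φc ⁻¹' I with hO₆def
  have hO₆Open : IsOpen O₆ :=
    hφcOn.continuousOn.isOpen_inter_preimage isOpen_Ioo hIo
  have h0O₆ : (0 : ℝ) ∈ O₆ := ⟨⟨ha, hb⟩, by rw [Set.mem_preimage, hφc0]; exact hu₀⟩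
  have hγφcCont : ContinuousOn (fun u => ((x (φc u), z (φc u)) : ℝ × ℝ)) O₆ := by
    apply hγ.continuousOn.comp (hφcOn.continuousOn.mono Set.inter_subset_left)
    intro u hu
    exact hu.2
  set O₇ := O₆ ∩ (fun u => ((x (φc u), z (φc u)) : ℝ × ℝ)) ⁻¹' Uc with hO₇def
  have hO₇Open : IsOpen O₇ := hγφcCont.isOpen_inter_preimage hO₆Open hUcOpen
  have h0O₇ : (0 : ℝ) ∈ O₇ := by
    refine ⟨h0O₆, ?_⟩
    rw [Set.mem_preimage, hφc0]
    exact hγUc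
  set Osrc := {q : ℝ × ℝ | q.1 ∈ O₇ ∧ q.2 ∈ Set.Ioo (-(π/2)) (π/2)} with hOsrcdef
  have hOsrcOpen : IsOpen Osrc :=
    (hO₇Open.preimage continuous_fst).inter (isOpen_Ioo.preimage continuous_snd)
  have h0Osrc : ((0, 0) : ℝ × ℝ) ∈ Osrc := by
    refine ⟨h0O₇, ?_⟩
    constructor <;> simp <;> linarith
  set Dsmall := Ds ∩ Osrc with hDsmalldef
  have hDsmallOpen : IsOpen Dsmall := hDsOpen.inter hOsrcOpen
  have h0Dsmall : ((0, 0) : ℝ × ℝ) ∈ Dsmall := ⟨h0Ds, h0Osrc⟩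
  obtain ⟨hSDsmall, hDtargetOpen⟩ := sd2_shrink hSDφ hDtOpen hDsmallOpen Set.inter_subset_left
  set Dtarget := Dt ∩ φtinv ⁻¹' Dsmall with hDtargetdef
  have hpDtarget : ((u₀, v₀) : ℝ × ℝ) ∈ Dtarget := by
    constructor
    · rw [← hφt00]; exact hφt0Dt
    · rw [Set.mem_preimage, ← hφt00, hSDφ.2.2.2.2.1 _ h0Ds]
      exact h0Dsmall
  -- the normal form identity
  have hident : ∀ q ∈ Dsmall,
      f (φt q) ∈ Wt → Φt (f (φt q)) = ![q.1 ^ n, q.1 ^ r, q.2] := by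
    intro q hq _
    have hu : q.1 ∈ Set.Ioo a b := hq.2.1.1.1
    have hγu : ((x (φc q.1), z (φc q.1)) : ℝ × ℝ) ∈ Uc := hq.2.1.2
    have hv : q.2 ∈ Set.Ioo (-(π/2)) (π/2) := hq.2.2
    have hqFU : (![x (φc q.1), z (φc q.1), q.2 + v₀] : Fin 3 → ℝ) ∈ Uset v₀ ε := by
      constructor
      · show 0 < ε * (![x (φc q.1), z (φc q.1), q.2 + v₀] : Fin 3 → ℝ) 0
        simpa using hγu.2
      · show (![x (φc q.1), z (φc q.1), q.2 + v₀] : Fin 3 → ℝ) 2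
          ∈ Set.Ioo (v₀ - π/2) (v₀ + π/2)
        simp only [Set.mem_Ioo] at hv ⊢
        simp only [Matrix.cons_val_two, Matrix.tail_cons, Matrix.head_cons]
        constructor <;> linarith [hv.1, hv.2]
    have hfφt : f (φt q) = Psi h (![x (φc q.1), z (φc q.1), q.2 + v₀] : Fin 3 → ℝ) :=
      hfPsi (φt q)
    rw [hfφt, hΦt]
    simp only []
    rw [hPI, PsiInv_Psi hε hqFU]
    have e0 : (((![x (φc q.1), z (φc q.1), q.2 + v₀] : Fin 3 → ℝ)) 0,
        ((![x (φc q.1), z (φc q.1), q.2 + v₀] : Fin 3 → ℝ)) 1)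
        = ((x (φc q.1), z (φc q.1)) : ℝ × ℝ) := by simp
    rw [e0]
    have hΦcval : Φc ((x (φc q.1), z (φc q.1)) : ℝ × ℝ) = (q.1 ^ n, q.1 ^ r) :=
      hcmain q.1 hu hγu.1
    rw [hΦcval]
    funext i
    fin_cases i <;> simp
  exact ⟨Dtarget, Dsmall, φt, φtinv, Wt, Wt', Φt, Φtinv, hDtargetOpen, hDsmallOpen,
    hpDtarget, h0Dsmall, hSDsmall, hφt00, hWtOpen, hWt'Open, hfpWt, h0Wt', hSD3,
    hΦtfp, hident⟩

end Forward


end Stmt19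

/-- For `(n,r) ∈ {(2,3),(2,5),(2,7),(3,4),(3,5)}` and a curve `γ = (x,z)` with `x ≠ 0`
on `I`: `γ` has an `r/n`-cusp at `u₀` iff for every `v₀` the helicoidal surface
`f(u,v) = (x(u) cos v, x(u) sin v, z(u) + hv)` has an `r/n`-cuspidal edge at `(u₀,v₀)`. -/
theorem stmt19 (I : Set ℝ) (hIo : IsOpen I) (hIc : Convex ℝ I)
    (x z : ℝ → ℝ) (hγ : ContDiffOn ℝ (⊤ : ℕ∞) (fun u => (x u, z u)) I)
    (hx : ∀ u ∈ I, x u ≠ 0) (u₀ : ℝ) (hu₀ : u₀ ∈ I) (h : ℝ) (n r : ℕ)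
    (hnr : (n, r) = (2, 3) ∨ (n, r) = (2, 5) ∨ (n, r) = (2, 7)
      ∨ (n, r) = (3, 4) ∨ (n, r) = (3, 5)) :
    AEquivCurveAt (fun u => (x u, z u)) u₀ n r
      ↔ ∀ v₀ : ℝ,
          AEquivSurfAt
            (fun p => ![x p.1 * Real.cos p.2, x p.1 * Real.sin p.2, z p.1 + h * p.2])
            (u₀, v₀) n r := by
  constructor
  · intro hc v₀
    exact Stmt19.forward I hIo x z hγ hx u₀ hu₀ h n r hc v₀
  · intro hs
    have hnr' : 2 ≤ n ∧ 2 ≤ r := by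
      rcases hnr with hh | hh | hh | hh | hh <;> (rw [Prod.mk.injEq] at hh; omega)
    exact Stmt19.backward I hIo x z hγ hx u₀ hu₀ h n r hnr'.1 hnr'.2 (hs 0)

end
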